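/- arXiv:2011.14719 — 6 statements merged into one kernel-verified Lean document; each statement's English description precedes it below -/
import Mathlib

section
/- Let ℓ ≥ 6 be an integer, let G be a graph, and let v, v_0, v_1, …, v_ℓ, v_{ℓ+1} be distinct vertices of G such that P = (v_1, …, v_ℓ) is a path in G and the neighborhood of v_i in G is exactly {v_{i−1}, v, v_{i+1}} for each i with 1 ≤ i ≤ ℓ. Let k ≥ 3 and let D be a proper k-orientation of the graph G − E(P) (G with the edges of the path P removed) such that the edge v v_i is oriented toward v_i for every i with 1 ≤ i ≤ ℓ, d⁻_D(v_1) ∈ {1, 2}, d⁻_D(v_ℓ) = 2, and d⁻_D(v) ≥ 4. Then D can be extended, by orienting the edges of P, into a proper k-orientation of G. -/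
/-!
In `D` an interior path vertex `w j` (`2 ≤ j < ℓ`) has the single in-neighbour `v`. Orienting the
path edges by `zigzag`, the in-degrees along the path become `d(w 1) ∈ {1, 2}`, then alternately
`3` and `1` up to `w (ℓ - 2)` (which gets `2` when `ℓ` is even), then `3, 2`. Adjacent path
vertices differ, interior ones stay below `d(v) ≥ 4`, and the ends `w 1`, `w ℓ` receive no new
arc, so every other edge keeps the distinct in-degrees it had in `D`.
-/

open SimpleGraph

structure Orient {V : Type*} (G : SimpleGraph V) where
  dir : V → V → Bool
  adj_of_dir : ∀ u v, dir u v = true → G.Adj u v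
  dir_iff : ∀ u v, G.Adj u v → (dir u v = true ↔ ¬ dir v u = true)

def Orient.inDeg {V : Type*} [Fintype V] {G : SimpleGraph V} (D : Orient G) (v : V) : ℕ :=
  (Finset.univ.filter (fun u => D.dir u v = true)).card

def Orient.Proper {V : Type*} [Fintype V] {G : SimpleGraph V} (D : Orient G) : Prop :=
  ∀ u v, G.Adj u v → D.inDeg u ≠ D.inDeg v

namespace Orient

variable {V : Type*} {G : SimpleGraph V}

lemma dir_eq_false_of_not_adj (D : Orient G) {a b : V} (h : ¬ G.Adj a b) : D.dir a b = false :=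
  Bool.eq_false_iff.2 fun hd => h (D.adj_of_dir a b hd)

def union {S : Set (Sym2 V)} (D₁ : Orient (G.deleteEdges S)) (D₂ : Orient (fromEdgeSet S))
    (hS : fromEdgeSet S ≤ G) : Orient G where
  dir a b := D₁.dir a b || D₂.dir a b
  adj_of_dir a b h := by
    rcases Bool.or_eq_true_iff.mp h with h | h
    exacts [(deleteEdges_adj.1 (D₁.adj_of_dir a b h)).1, hS (D₂.adj_of_dir a b h)]
  dir_iff a b hab := by
    by_cases hmem : s(a, b) ∈ S
    · have hdel : ∀ x y, s(x, y) = s(a, b) → ¬ (G.deleteEdges S).Adj x y :=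
        fun x y he h => (deleteEdges_adj.1 h).2 (he ▸ hmem)
      simp [D₁.dir_eq_false_of_not_adj (hdel a b rfl),
        D₁.dir_eq_false_of_not_adj (hdel b a Sym2.eq_swap), D₂.dir_iff a b ⟨hmem, hab.ne⟩]
    · have hnot : ∀ x y, s(x, y) = s(a, b) → ¬ (fromEdgeSet S).Adj x y :=
        fun x y he h => hmem (he ▸ ((fromEdgeSet_adj _).1 h).1)
      simp [D₂.dir_eq_false_of_not_adj (hnot a b rfl),
        D₂.dir_eq_false_of_not_adj (hnot b a Sym2.eq_swap),
        D₁.dir_iff a b (deleteEdges_adj.2 ⟨hab, hmem⟩)]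

section union

variable {S : Set (Sym2 V)} (D₁ : Orient (G.deleteEdges S)) (D₂ : Orient (fromEdgeSet S))
  (hS : fromEdgeSet S ≤ G)

lemma union_dir_of_adj {a b : V} (h : (G.deleteEdges S).Adj a b) :
    (D₁.union D₂ hS).dir a b = D₁.dir a b := by
  have : ¬ (fromEdgeSet S).Adj a b := fun h' => (deleteEdges_adj.1 h).2 ((fromEdgeSet_adj _).1 h').1
  simp [union, D₂.dir_eq_false_of_not_adj this]

lemma union_dir_of_mem {a b : V} (h : s(a, b) ∈ S) :
    (D₁.union D₂ hS).dir a b = D₂.dir a b := by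
  have : ¬ (G.deleteEdges S).Adj a b := fun h' => (deleteEdges_adj.1 h').2 h
  simp [union, D₁.dir_eq_false_of_not_adj this]

lemma inDeg_union [Fintype V] (x : V) :
    (D₁.union D₂ hS).inDeg x = D₁.inDeg x + D₂.inDeg x := by
  classical
  unfold inDeg
  rw [← Finset.card_union_of_disjoint]
  · congr 1
    ext u
    simp [union]
  · refine Finset.disjoint_filter.2 fun u _ h₁ h₂ => ?_
    exact (deleteEdges_adj.1 (D₁.adj_of_dir u x h₁)).2
      ((fromEdgeSet_adj _).1 (D₂.adj_of_dir u x h₂)).1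

end union

variable [Fintype V]

lemma inDeg_eq_card_filter (D : Orient G) {x : V} (s : Finset V) (hs : ∀ u, G.Adj u x → u ∈ s) :
    D.inDeg x = (s.filter fun u => D.dir u x).card := by
  unfold inDeg
  congr 1
  ext u
  simpa using fun h => hs u (D.adj_of_dir u x h)

lemma inDeg_eq_of_neighborSet_eq (D : Orient G) {x a b c : V} (h : G.neighborSet x = {a, b, c})
    (hab : a ≠ b) (hac : a ≠ c) (hbc : b ≠ c) :
    D.inDeg x = (D.dir a x).toNat + (D.dir b x).toNat + (D.dir c x).toNat := by
  classical
  rw [D.inDeg_eq_card_filter {a, b, c} fun u hu => by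
    have hu : u ∈ G.neighborSet x := hu.symm
    simpa [h] using hu]
  rw [Finset.card_filter, Finset.sum_insert (by simp [hab, hac]),
    Finset.sum_insert (by simp [hbc]), Finset.sum_singleton]
  cases D.dir a x <;> cases D.dir b x <;> cases D.dir c x <;> rfl

end Orient

section PathOrientation

variable {V : Type*} (w : ℕ → V) (ℓ : ℕ) (f : ℕ → Bool)

def pathEdges : Set (Sym2 V) := {e | ∃ i, 1 ≤ i ∧ i < ℓ ∧ e = s(w i, w (i + 1))}

def pathTail (i : ℕ) : V := if f i then w i else w (i + 1)

def pathHead (i : ℕ) : V := if f i then w (i + 1) else w i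

lemma sym2_pathTail_pathHead (i : ℕ) : s(pathTail w f i, pathHead w f i) = s(w i, w (i + 1)) := by
  cases h : f i <;> simp [pathTail, pathHead, h, Sym2.eq_swap]

variable {w ℓ}

lemma eq_of_sym2_apply_succ_eq (hw : Set.InjOn w (Set.Icc 1 ℓ)) {i j : ℕ} (hi : 1 ≤ i) (hiℓ : i < ℓ)
    (hj : 1 ≤ j) (hjℓ : j < ℓ) (h : s(w i, w (i + 1)) = s(w j, w (j + 1))) : i = j := by
  have hw' : ∀ a b, 1 ≤ a → a ≤ ℓ → 1 ≤ b → b ≤ ℓ → w a = w b → a = b :=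
    fun a b ha ha' hb hb' => hw ⟨ha, ha'⟩ ⟨hb, hb'⟩
  rcases Sym2.eq_iff.1 h with ⟨h₁, -⟩ | ⟨h₁, h₂⟩
  · exact hw' _ _ hi hiℓ.le hj hjℓ.le h₁
  · have := hw' _ _ hi hiℓ.le (by omega) (by omega) h₁
    have := hw' _ _ (by omega) (by omega) hj hjℓ.le h₂
    omega

lemma apply_ne_apply_succ (hw : Set.InjOn w (Set.Icc 1 ℓ)) {i : ℕ} (hi : 1 ≤ i) (hiℓ : i < ℓ) :
    w i ≠ w (i + 1) := fun h => by
  have := hw ⟨hi, hiℓ.le⟩ ⟨by omega, by omega⟩ h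
  omega

open scoped Classical in
noncomputable def pathOrient (hw : Set.InjOn w (Set.Icc 1 ℓ)) :
    Orient (fromEdgeSet (pathEdges w ℓ)) where
  dir a b := decide (∃ i, 1 ≤ i ∧ i < ℓ ∧ a = pathTail w f i ∧ b = pathHead w f i)
  adj_of_dir a b h := by
    obtain ⟨i, hi, hiℓ, rfl, rfl⟩ := of_decide_eq_true h
    refine (fromEdgeSet_adj _).2 ⟨⟨i, hi, hiℓ, sym2_pathTail_pathHead w f i⟩, ?_⟩
    have := apply_ne_apply_succ hw hi hiℓ
    cases hf : f i <;> simp [pathTail, pathHead, hf, this, this.symm]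
  dir_iff a b hab := by
    obtain ⟨⟨i, hi, hiℓ, he⟩, hne⟩ := (fromEdgeSet_adj _).1 hab
    simp only [decide_eq_true_eq]
    constructor
    · rintro ⟨j, hj, hjℓ, rfl, rfl⟩ ⟨k, hk, hkℓ, hb, ha⟩
      have hjk := eq_of_sym2_apply_succ_eq hw hj hjℓ hk hkℓ <| by
        rw [← sym2_pathTail_pathHead, ← sym2_pathTail_pathHead, hb, ha, Sym2.eq_swap]
      subst hjk
      exact hne hb.symm
    · intro hba
      rw [← sym2_pathTail_pathHead w f i] at he
      rcases Sym2.eq_iff.1 he with ⟨ha, hb⟩ | ⟨ha, hb⟩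
      · exact ⟨i, hi, hiℓ, ha, hb⟩
      · exact absurd ⟨i, hi, hiℓ, hb, ha⟩ hba

variable (hw : Set.InjOn w (Set.Icc 1 ℓ))

lemma pathOrient_dir_iff {a b : V} :
    (pathOrient f hw).dir a b = true ↔
      ∃ i, 1 ≤ i ∧ i < ℓ ∧ a = pathTail w f i ∧ b = pathHead w f i := by
  simp [pathOrient]

lemma pathOrient_dir_succ_pred {i : ℕ} (hi : 1 ≤ i) (hiℓ : i < ℓ) :
    (pathOrient f hw).dir (w i) (w (i + 1)) = f i ∧
      (pathOrient f hw).dir (w (i + 1)) (w i) = !f i := by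
  have hadj : (fromEdgeSet (pathEdges w ℓ)).Adj (w i) (w (i + 1)) :=
    (fromEdgeSet_adj _).2 ⟨⟨i, hi, hiℓ, rfl⟩, apply_ne_apply_succ hw hi hiℓ⟩
  have hiff := (pathOrient f hw).dir_iff _ _ hadj
  have harc : (pathOrient f hw).dir (pathTail w f i) (pathHead w f i) = true :=
    (pathOrient_dir_iff f hw).2 ⟨i, hi, hiℓ, rfl, rfl⟩
  cases hf : f i <;> simp only [pathTail, pathHead, hf] at harc <;> simp_all

variable [Fintype V]

lemma pathOrient_inDeg_eq_zero {x : V} (hx : ∀ i, 1 ≤ i → i < ℓ → pathHead w f i ≠ x) :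
    (pathOrient f hw).inDeg x = 0 := by
  refine Finset.card_eq_zero.2 (Finset.filter_eq_empty_iff.2 fun u _ hu => ?_)
  obtain ⟨i, hi, hiℓ, -, rfl⟩ := (pathOrient_dir_iff f hw).1 hu
  exact hx i hi hiℓ rfl

end PathOrientation

section Zigzag

/-- Path edge `i` points forwards iff `i` is odd, except that the last two edges both point
towards `w (ℓ - 1)`. -/
def zigzag (ℓ i : ℕ) : Bool := decide (i + 2 < ℓ ∧ i % 2 = 1 ∨ i + 2 = ℓ)

def zigzagInDeg (ℓ j : ℕ) : ℕ := (zigzag ℓ (j - 1)).toNat + 1 + (!zigzag ℓ j).toNat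

variable {ℓ : ℕ}

lemma zigzag_one (hℓ : 4 ≤ ℓ) : zigzag ℓ 1 = true :=
  decide_eq_true (Or.inl ⟨by omega, rfl⟩)

lemma zigzag_pred : zigzag ℓ (ℓ - 1) = false :=
  decide_eq_false (by omega)

lemma zigzagInDeg_le_three (j : ℕ) : zigzagInDeg ℓ j ≤ 3 := by
  unfold zigzagInDeg
  cases zigzag ℓ (j - 1) <;> cases zigzag ℓ j <;> simp

lemma zigzagInDeg_two (hℓ : 5 ≤ ℓ) : zigzagInDeg ℓ 2 = 3 := by
  unfold zigzagInDeg zigzag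
  rw [decide_eq_true (by omega), decide_eq_false (by omega)]
  rfl

lemma zigzagInDeg_pred (hℓ : 2 ≤ ℓ) : zigzagInDeg ℓ (ℓ - 1) = 3 := by
  unfold zigzagInDeg zigzag
  rw [decide_eq_true (by omega), decide_eq_false (by omega)]
  rfl

lemma zigzagInDeg_ne_succ {i : ℕ} (hiℓ : i + 2 ≤ ℓ) :
    zigzagInDeg ℓ i ≠ zigzagInDeg ℓ (i + 1) := by
  simp only [zigzagInDeg, zigzag, Bool.toNat, Bool.cond_eq_ite, Bool.not_eq_true',
    decide_eq_true_eq, decide_eq_false_iff_not]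
  split_ifs <;> omega

end Zigzag

section Extension

variable {V : Type*} {G : SimpleGraph V} {ℓ : ℕ} {v : V} {w : ℕ → V}

lemma adj_succ_of_neighborSet_eq
    (hnbr : ∀ i, 1 ≤ i → i ≤ ℓ → G.neighborSet (w i) = {w (i - 1), v, w (i + 1)})
    {i : ℕ} (hi : 1 ≤ i) (hiℓ : i < ℓ) : G.Adj (w i) (w (i + 1)) := by
  have : w (i + 1) ∈ G.neighborSet (w i) := by simp [hnbr i hi hiℓ.le]
  exact this

lemma fromEdgeSet_pathEdges_le
    (hnbr : ∀ i, 1 ≤ i → i ≤ ℓ → G.neighborSet (w i) = {w (i - 1), v, w (i + 1)}) :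
    fromEdgeSet (pathEdges w ℓ) ≤ G := by
  intro a b h
  obtain ⟨⟨i, hi, hiℓ, he⟩, -⟩ := (fromEdgeSet_adj _).1 h
  rcases Sym2.eq_iff.1 he with ⟨rfl, rfl⟩ | ⟨rfl, rfl⟩
  exacts [adj_succ_of_neighborSet_eq hnbr hi hiℓ, (adj_succ_of_neighborSet_eq hnbr hi hiℓ).symm]

lemma eq_of_deleteEdges_pathEdges_adj
    (hnbr : ∀ i, 1 ≤ i → i ≤ ℓ → G.neighborSet (w i) = {w (i - 1), v, w (i + 1)})
    {j : ℕ} (hj : 2 ≤ j) (hjℓ : j < ℓ) {b : V}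
    (h : (G.deleteEdges (pathEdges w ℓ)).Adj (w j) b) : b = v := by
  obtain ⟨hadj, hnot⟩ := deleteEdges_adj.1 h
  have hb : b ∈ G.neighborSet (w j) := hadj
  rw [hnbr j (by omega) hjℓ.le] at hb
  rcases hb with rfl | rfl | rfl
  · refine absurd ⟨j - 1, by omega, by omega, ?_⟩ hnot
    rw [Nat.sub_add_cancel (by omega : 1 ≤ j), Sym2.eq_swap]
  · rfl
  · exact absurd ⟨j, by omega, hjℓ, rfl⟩ hnot

variable (D : Orient (G.deleteEdges (pathEdges w ℓ))) (hw : Set.InjOn w (Set.Icc 1 ℓ))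
  (hnbr : ∀ i, 1 ≤ i → i ≤ ℓ → G.neighborSet (w i) = {w (i - 1), v, w (i + 1)})

noncomputable def zigzagExtension : Orient G :=
  D.union (pathOrient (zigzag ℓ) hw) (fromEdgeSet_pathEdges_le hnbr)

lemma zigzagExtension_dir_of_adj {a b : V} (h : (G.deleteEdges (pathEdges w ℓ)).Adj a b) :
    (zigzagExtension D hw hnbr).dir a b = D.dir a b :=
  D.union_dir_of_adj _ _ h

variable [Fintype V]

lemma zigzagExtension_inDeg_of_ne (hℓ : 4 ≤ ℓ) {x : V} (hx : ∀ j, 2 ≤ j → j < ℓ → x ≠ w j) :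
    (zigzagExtension D hw hnbr).inDeg x = D.inDeg x := by
  rw [zigzagExtension, Orient.inDeg_union, pathOrient_inDeg_eq_zero, add_zero]
  intro i hi hiℓ
  unfold pathHead
  split_ifs with hf
  · have : i + 1 ≠ ℓ := fun h => by simp [show i = ℓ - 1 by omega, zigzag_pred] at hf
    exact (hx (i + 1) (by omega) (by omega)).symm
  · have : i ≠ 1 := by rintro rfl; exact hf (zigzag_one hℓ)
    exact (hx i (by omega) hiℓ).symm

lemma zigzagExtension_inDeg_interior (hv : ∀ i, 1 ≤ i → i ≤ ℓ → w i ≠ v) {j : ℕ} (hj : 2 ≤ j)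
    (hjℓ : j < ℓ) (hdir : D.dir v (w j) = true) :
    (zigzagExtension D hw hnbr).inDeg (w j) = zigzagInDeg ℓ j := by
  have hj' : j - 1 + 1 = j := by omega
  have hmem₁ : s(w (j - 1), w j) ∈ pathEdges w ℓ := ⟨j - 1, by omega, by omega, by rw [hj']⟩
  have hmem₂ : s(w (j + 1), w j) ∈ pathEdges w ℓ := ⟨j, by omega, hjℓ, Sym2.eq_swap⟩
  have hpred := (pathOrient_dir_succ_pred (zigzag ℓ) hw (i := j - 1) (by omega) (by omega)).1
  have hsucc := (pathOrient_dir_succ_pred (zigzag ℓ) hw (i := j) (by omega) hjℓ).2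
  rw [hj'] at hpred
  rw [Orient.inDeg_eq_of_neighborSet_eq _ (hnbr j (by omega) hjℓ.le) (hv _ (by omega) (by omega))
    (hw.ne ⟨by omega, by omega⟩ ⟨by omega, by omega⟩ (by omega)) (hv _ (by omega) hjℓ).symm,
    zigzagExtension, D.union_dir_of_mem _ _ hmem₁, D.union_dir_of_mem _ _ hmem₂,
    D.union_dir_of_adj _ _ (D.adj_of_dir _ _ hdir), hpred, hsucc, hdir]
  rfl

lemma zigzagExtension_inDeg_le_max (hℓ : 4 ≤ ℓ) (hv : ∀ i, 1 ≤ i → i ≤ ℓ → w i ≠ v)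
    (hdirv : ∀ i, 1 ≤ i → i ≤ ℓ → D.dir v (w i) = true) (x : V) :
    (zigzagExtension D hw hnbr).inDeg x ≤ max (D.inDeg x) 3 := by
  by_cases hx : ∃ j, 2 ≤ j ∧ j < ℓ ∧ x = w j
  · obtain ⟨j, hj, hjℓ, rfl⟩ := hx
    rw [zigzagExtension_inDeg_interior D hw hnbr hv hj hjℓ (hdirv j (by omega) hjℓ.le)]
    exact (zigzagInDeg_le_three j).trans (le_max_right _ _)
  · push Not at hx
    exact (zigzagExtension_inDeg_of_ne D hw hnbr hℓ hx).trans_le (le_max_left _ _)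

lemma zigzagExtension_inDeg_ne_succ (hℓ : 5 ≤ ℓ) (hv : ∀ i, 1 ≤ i → i ≤ ℓ → w i ≠ v)
    (hdirv : ∀ i, 1 ≤ i → i ≤ ℓ → D.dir v (w i) = true)
    (h1 : D.inDeg (w 1) = 1 ∨ D.inDeg (w 1) = 2) (hl : D.inDeg (w ℓ) = 2)
    {i : ℕ} (hi : 1 ≤ i) (hiℓ : i < ℓ) :
    (zigzagExtension D hw hnbr).inDeg (w i) ≠ (zigzagExtension D hw hnbr).inDeg (w (i + 1)) := by
  have hinterior : ∀ j, 2 ≤ j → j < ℓ → (zigzagExtension D hw hnbr).inDeg (w j) = zigzagInDeg ℓ j :=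
    fun j hj hjℓ => zigzagExtension_inDeg_interior D hw hnbr hv hj hjℓ (hdirv j (by omega) hjℓ.le)
  have hend : ∀ k, k = 1 ∨ k = ℓ → (zigzagExtension D hw hnbr).inDeg (w k) = D.inDeg (w k) :=
    fun k hk => zigzagExtension_inDeg_of_ne D hw hnbr (by omega) fun j hj hjℓ =>
      hw.ne ⟨by omega, by omega⟩ ⟨by omega, by omega⟩ (by omega)
  rcases (show i = 1 ∨ (2 ≤ i ∧ i + 1 < ℓ) ∨ i + 1 = ℓ by omega) with rfl | ⟨hi₂, hi'⟩ | hiℓ'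
  · rw [hend 1 (Or.inl rfl), hinterior 2 le_rfl (by omega), zigzagInDeg_two hℓ]
    omega
  · rw [hinterior i hi₂ (by omega), hinterior (i + 1) (by omega) hi']
    exact zigzagInDeg_ne_succ (by omega)
  · rw [hiℓ', hend ℓ (Or.inr rfl), hl, hinterior i (by omega) hiℓ, show i = ℓ - 1 by omega,
      zigzagInDeg_pred (by omega)]
    decide

lemma zigzagExtension_proper (hℓ : 5 ≤ ℓ) (hv : ∀ i, 1 ≤ i → i ≤ ℓ → w i ≠ v)
    (hdirv : ∀ i, 1 ≤ i → i ≤ ℓ → D.dir v (w i) = true) (hproper : D.Proper)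
    (h1 : D.inDeg (w 1) = 1 ∨ D.inDeg (w 1) = 2) (hl : D.inDeg (w ℓ) = 2)
    (hvdeg : 3 < D.inDeg v) : (zigzagExtension D hw hnbr).Proper := by
  set E := zigzagExtension D hw hnbr
  have hEv : E.inDeg v = D.inDeg v :=
    zigzagExtension_inDeg_of_ne D hw hnbr (by omega) fun i _ _ h =>
      hv i (by omega) (by omega) h.symm
  have hinterior : ∀ j, 2 ≤ j → j < ℓ → ∀ b, (G.deleteEdges (pathEdges w ℓ)).Adj (w j) b →
      E.inDeg (w j) ≠ E.inDeg b := by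
    intro j hj hjℓ b hb
    rw [eq_of_deleteEdges_pathEdges_adj hnbr hj hjℓ hb, hEv,
      zigzagExtension_inDeg_interior D hw hnbr hv hj hjℓ (hdirv j (by omega) hjℓ.le)]
    have := zigzagInDeg_le_three (ℓ := ℓ) j
    omega
  intro a b hab
  by_cases hP : s(a, b) ∈ pathEdges w ℓ
  · obtain ⟨i, hi, hiℓ, he⟩ := hP
    have := zigzagExtension_inDeg_ne_succ D hw hnbr hℓ hv hdirv h1 hl hi hiℓ
    rcases Sym2.eq_iff.1 he with ⟨rfl, rfl⟩ | ⟨rfl, rfl⟩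
    exacts [this, this.symm]
  have hab' : (G.deleteEdges (pathEdges w ℓ)).Adj a b := deleteEdges_adj.2 ⟨hab, hP⟩
  by_cases ha : ∃ j, 2 ≤ j ∧ j < ℓ ∧ a = w j
  · obtain ⟨j, hj, hjℓ, rfl⟩ := ha
    exact hinterior j hj hjℓ b hab'
  by_cases hb : ∃ j, 2 ≤ j ∧ j < ℓ ∧ b = w j
  · obtain ⟨j, hj, hjℓ, rfl⟩ := hb
    exact (hinterior j hj hjℓ a hab'.symm).symm
  push Not at ha hb
  rw [zigzagExtension_inDeg_of_ne D hw hnbr (by omega) ha,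
    zigzagExtension_inDeg_of_ne D hw hnbr (by omega) hb]
  exact hproper a b hab'

end Extension

/-- Let `v, w 0, w 1, …, w ℓ, w (ℓ+1)` be distinct vertices with `ℓ ≥ 6`, such that the
neighbourhood of `w i` is exactly `{w (i-1), v, w (i+1)}` for `1 ≤ i ≤ ℓ`. Any proper
`k`-orientation (`k ≥ 3`) of `G` minus the edges of the path `(w 1, …, w ℓ)` in which
every edge `v (w i)` is oriented toward `w i`, `w 1` has indegree `1` or `2`, `w ℓ` has
indegree `2`, and `v` has indegree at least `4`, extends to a proper `k`-orientation
of `G`. -/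
theorem extend_orientation_along_path {V : Type*} [Fintype V] (G : SimpleGraph V)
    (ℓ k : ℕ) (hℓ : 6 ≤ ℓ) (hk : 3 ≤ k) (v : V) (w : ℕ → V)
    (hinj : Set.InjOn w (Set.Iic (ℓ + 1))) (hv : ∀ i ≤ ℓ + 1, w i ≠ v)
    (hnbr : ∀ i, 1 ≤ i → i ≤ ℓ → G.neighborSet (w i) = {w (i - 1), v, w (i + 1)})
    (D : Orient (G.deleteEdges {e | ∃ i, 1 ≤ i ∧ i < ℓ ∧ e = s(w i, w (i + 1))}))
    (hproper : D.Proper) (hkor : ∀ x, D.inDeg x ≤ k)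
    (hdirv : ∀ i, 1 ≤ i → i ≤ ℓ → D.dir v (w i) = true)
    (h1 : D.inDeg (w 1) = 1 ∨ D.inDeg (w 1) = 2)
    (hl : D.inDeg (w ℓ) = 2) (hvdeg : 4 ≤ D.inDeg v) :
    ∃ D' : Orient G, D'.Proper ∧ (∀ x, D'.inDeg x ≤ k) ∧
      ∀ a b, (G.deleteEdges {e | ∃ i, 1 ≤ i ∧ i < ℓ ∧ e = s(w i, w (i + 1))}).Adj a b →
        D'.dir a b = D.dir a b := by
  have hw : Set.InjOn w (Set.Icc 1 ℓ) :=
    hinj.mono (Set.Icc_subset_Iic_self.trans (Set.Iic_subset_Iic.2 ℓ.le_succ))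
  have hv' : ∀ i, 1 ≤ i → i ≤ ℓ → w i ≠ v := fun i _ hi => hv i (by omega)
  refine ⟨zigzagExtension D hw hnbr,
    zigzagExtension_proper D hw hnbr (by omega) hv' hdirv hproper h1 hl hvdeg,
    fun x => (zigzagExtension_inDeg_le_max D hw hnbr (by omega) hv' hdirv x).trans
      (max_le (hkor x) hk),
    fun a b => zigzagExtension_dir_of_adj D hw hnbr⟩
end

section
/- If G is a chordal claw-free graph, then Δ(G) ≤ 3ω(G), and consequently χ⃗(G) ≤ 3ω(G). -/
open SimpleGraph

/-- The proper orientation number: the least `k` such that `G` admits a proper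
`k`-orientation (an orientation with all indegrees at most `k`). -/
noncomputable def properOrientNum {V : Type*} [Fintype V] (G : SimpleGraph V) : ℕ :=
  sInf {k | ∃ D : Orient G, D.Proper ∧ ∀ v, D.inDeg v ≤ k}

/-- A graph is chordal if it has no induced cycle of length at least `4`. -/
def IsChordal {V : Type*} (G : SimpleGraph V) : Prop :=
  ∀ n, 4 ≤ n → IsEmpty (cycleGraph n ↪g G)

/-- A graph is claw-free if it has no induced `K_{1,3}`. -/
def IsClawFree {V : Type*} (G : SimpleGraph V) : Prop :=
  IsEmpty (completeBipartiteGraph (Fin 1) (Fin 3) ↪g G)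

/-!
If the neighbourhood of `v` is not a clique, pick non-adjacent neighbours `u` and `x`. By
claw-freeness the neighbours of `v` that are not adjacent to `x` form a clique, and likewise for
`u`; by chordality (no induced `u p x q` cycle) the common neighbours of `u` and `x` form a clique.
These three cliques cover the neighbourhood, so `Δ ≤ 3ω`.

For `χ⃗ ≤ Δ`, remove a vertex of maximum degree in the remaining graph, over and over, and orient
every edge towards its endpoint removed first. A removed vertex `w` then has indegree equal to its
degree at the time of removal, which exceeds the indegree of each neighbour removed after it.
-/

open Finset

section

variable {V : Type*} {G : SimpleGraph V}

theorem IsClawFree.isClique_nonAdj_of_adj (hclaw : IsClawFree G) {v x : V} (hvx : G.Adj v x) :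
    G.IsClique {p | G.Adj v p ∧ p ≠ x ∧ ¬ G.Adj x p} := by
  rintro p ⟨hvp, hpx, hxp⟩ q ⟨hvq, hqx, hxq⟩ hpq
  by_contra hnpq
  have := hvx.ne; have := hvp.ne; have := hvq.ne
  have hf : (Sum.elim (fun _ => v) ![x, p, q] : Fin 1 ⊕ Fin 3 → V).Injective := by
    rintro (i | i) (j | j) h <;> fin_cases i <;> fin_cases j <;> simp_all [eq_comm]
  refine hclaw.false ⟨⟨_, hf⟩, fun {i j} => ?_⟩
  simp only [Function.Embedding.coeFn_mk]
  rcases i with i | i <;> rcases j with j | j <;> fin_cases i <;> fin_cases j <;>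
    simp_all [G.adj_comm]

theorem IsChordal.isClique_commonNeighbors (hch : IsChordal G) {u x : V} (hux : u ≠ x)
    (hnux : ¬ G.Adj u x) : G.IsClique (G.commonNeighbors u x) := by
  rintro p ⟨hup, hxp⟩ q ⟨huq, hxq⟩ hpq
  by_contra hnpq
  have := hup.ne; have := hxp.ne; have := huq.ne; have := hxq.ne
  have hf : (![u, p, x, q] : Fin 4 → V).Injective := by
    intro i j h; fin_cases i <;> fin_cases j <;> simp_all [eq_comm]
  refine (hch 4 le_rfl).false ⟨⟨_, hf⟩, fun {i j} => ?_⟩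
  simp only [Function.Embedding.coeFn_mk]
  fin_cases i <;> fin_cases j <;> simp_all [G.adj_comm, cycleGraph_adj] <;> decide

theorem card_le_card_mul_cliqueNum_of_subset_iUnion [Finite V] {ι : Type*} [Fintype ι]
    {S : ι → Set V} (hS : ∀ i, G.IsClique (S i)) {t : Finset V} (ht : ↑t ⊆ ⋃ i, S i) :
    #t ≤ Fintype.card ι * G.cliqueNum := by
  classical
  calc #t ≤ #(univ.biUnion fun i => {a ∈ t | a ∈ S i}) := by
        refine card_le_card fun a ha => ?_
        simpa [ha] using ht ha
    _ ≤ ∑ i, #{a ∈ t | a ∈ S i} := card_biUnion_le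
    _ ≤ ∑ _i : ι, G.cliqueNum := sum_le_sum fun i _ =>
        ((hS i).subset (by simp [Set.subset_def])).card_le_cliqueNum
    _ = Fintype.card ι * G.cliqueNum := by simp

theorem IsChordal.degree_le_three_mul_cliqueNum [Fintype V] [DecidableRel G.Adj]
    (hch : IsChordal G) (hclaw : IsClawFree G) (v : V) : G.degree v ≤ 3 * G.cliqueNum := by
  rw [← card_neighborFinset_eq_degree]
  by_cases hN : G.IsClique (G.neighborSet v)
  · calc #(G.neighborFinset v) ≤ Fintype.card (Fin 1) * G.cliqueNum :=
          card_le_card_mul_cliqueNum_of_subset_iUnion (S := fun _ => G.neighborSet v)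
            (fun _ => hN) (Set.subset_iUnion_of_subset 0 (by simp))
      _ ≤ 3 * G.cliqueNum := by rw [Fintype.card_fin]; omega
  obtain ⟨u, hvu, x, hvx, hux, hnux⟩ : ∃ u, G.Adj v u ∧ ∃ x, G.Adj v x ∧ u ≠ x ∧ ¬ G.Adj u x := by
    simpa [IsClique, Set.Pairwise] using hN
  have hcover : ∀ a,
      (a ≠ x ∧ ¬ G.Adj x a) ∨ (a ≠ u ∧ ¬ G.Adj u a) ∨ (G.Adj u a ∧ G.Adj x a) := by
    intro a
    by_cases hxa : G.Adj x a
    · by_cases hua : G.Adj u a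
      · exact Or.inr (Or.inr ⟨hua, hxa⟩)
      · exact Or.inr (Or.inl ⟨by rintro rfl; exact hnux hxa.symm, hua⟩)
    · by_cases hax : a = x
      · exact Or.inr (Or.inl ⟨hax ▸ hux.symm, hax ▸ hnux⟩)
      · exact Or.inl ⟨hax, hxa⟩
  calc #(G.neighborFinset v) ≤ Fintype.card (Fin 3) * G.cliqueNum :=
        card_le_card_mul_cliqueNum_of_subset_iUnion
          (S := ![{p | G.Adj v p ∧ p ≠ x ∧ ¬ G.Adj x p}, {p | G.Adj v p ∧ p ≠ u ∧ ¬ G.Adj u p},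
            G.commonNeighbors u x])
          (by
            intro i; fin_cases i
            exacts [hclaw.isClique_nonAdj_of_adj hvx, hclaw.isClique_nonAdj_of_adj hvu,
              hch.isClique_commonNeighbors hux hnux])
          (by
            intro a ha
            have hva : G.Adj v a := by simpa using ha
            simpa [Fin.exists_fin_succ, hva, mem_commonNeighbors] using hcover a)
    _ = 3 * G.cliqueNum := by simp

theorem exists_greedy_rank [DecidableRel G.Adj] (s : Finset V) :
    ∃ r : V → ℕ, Set.InjOn r s ∧ ∀ w ∈ s, ∀ u ∈ s, r w ≤ r u →
      #{x ∈ s | r w ≤ r x ∧ G.Adj u x} ≤ #{x ∈ s | r w ≤ r x ∧ G.Adj w x} := by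
  classical
  induction s using Finset.strongInduction with
  | H s ih =>
  rcases s.eq_empty_or_nonempty with rfl | hne
  · exact ⟨fun _ => 0, by simp, by simp⟩
  obtain ⟨w, hw, hmax⟩ := s.exists_max_image (fun u => #{x ∈ s | G.Adj u x}) hne
  obtain ⟨r, hinj, hr⟩ := ih (s.erase w) (erase_ssubset hw)
  set r' : V → ℕ := fun x => if x = w then 0 else r x + 1 with hr'
  refine ⟨r', ?_, ?_⟩
  · intro a ha b hb hab
    simp only [hr'] at hab
    split_ifs at hab with haw hbw hbw
    · exact haw.trans hbw.symm
    · exact hinj (mem_erase.2 ⟨haw, ha⟩) (mem_erase.2 ⟨hbw, hb⟩) (by omega)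
  intro w' hw' u hu hle
  by_cases hw'w : w' = w
  · subst hw'w
    simpa [hr'] using hmax u hu
  have huw : u ≠ w := by rintro rfl; simp [hr', hw'w] at hle
  have hrestrict : ∀ y, {x ∈ s | r' w' ≤ r' x ∧ G.Adj y x}
      = {x ∈ s.erase w | r w' ≤ r x ∧ G.Adj y x} := by
    intro y; ext x
    by_cases hxw : x = w <;> simp [hr', hxw, hw'w]
  rw [hrestrict, hrestrict]
  exact hr w' (mem_erase.2 ⟨hw'w, hw'⟩) u (mem_erase.2 ⟨huw, hu⟩)
    (by simpa [hr', hw'w, huw] using hle)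

namespace Orient

variable [DecidableRel G.Adj] {α : Type*} [LinearOrder α] {r : V → α}

variable (G r) in
def ofRank (hr : r.Injective) : Orient G where
  dir u v := decide (G.Adj u v ∧ r v < r u)
  adj_of_dir u v h := (of_decide_eq_true h).1
  dir_iff u v huv := by
    have := hr.ne huv.ne
    simp only [decide_eq_true_eq, huv, huv.symm, true_and, not_lt]
    exact ⟨le_of_lt, fun h => lt_of_le_of_ne h this.symm⟩

variable [Fintype V] (hr : r.Injective)

theorem inDeg_ofRank (v : V) : (ofRank G r hr).inDeg v = #{u | r v ≤ r u ∧ G.Adj v u} := by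
  unfold inDeg ofRank
  congr 1; ext u
  simp only [mem_filter, mem_univ, true_and, decide_eq_true_eq, G.adj_comm u v]
  exact ⟨fun h => ⟨h.2.le, h.1⟩,
    fun h => ⟨h.2, lt_of_le_of_ne h.1 (hr.ne (G.ne_of_adj h.2))⟩⟩

theorem inDeg_ofRank_le_degree (v : V) : (ofRank G r hr).inDeg v ≤ G.degree v := by
  rw [inDeg_ofRank, ← card_neighborFinset_eq_degree]
  exact card_le_card fun u hu => by simpa using (mem_filter.1 hu).2.2

theorem ofRank_proper
    (hgreedy : ∀ w u, r w ≤ r u → #{x | r w ≤ r x ∧ G.Adj u x} ≤ #{x | r w ≤ r x ∧ G.Adj w x}) :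
    (ofRank G r hr).Proper := by
  have hlt : ∀ u v, G.Adj u v → r v < r u → (ofRank G r hr).inDeg u < (ofRank G r hr).inDeg v := by
    intro u v huv hvu
    rw [inDeg_ofRank, inDeg_ofRank]
    refine lt_of_lt_of_le (card_lt_card ?_) (hgreedy v u hvu.le)
    refine (ssubset_iff_of_subset fun x => ?_).2 ⟨v, by simp [huv], by simp [hvu]⟩
    simpa using fun hux hadj => ⟨hvu.le.trans hux, hadj⟩
  intro u v huv
  rcases lt_or_gt_of_ne (hr.ne huv.ne) with h | h
  · exact (hlt v u huv.symm h).ne'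
  · exact (hlt u v huv h).ne

end Orient

theorem properOrientNum_le_maxDegree [Fintype V] [DecidableRel G.Adj] :
    properOrientNum G ≤ G.maxDegree := by
  obtain ⟨r, hinj, hgreedy⟩ := exists_greedy_rank (G := G) univ
  have hr : r.Injective := Set.injOn_univ.1 (by simpa using hinj)
  refine Nat.sInf_le ⟨Orient.ofRank G r hr, Orient.ofRank_proper hr ?_, fun v => ?_⟩
  · simpa using hgreedy
  · exact (Orient.inDeg_ofRank_le_degree hr v).trans (G.degree_le_maxDegree v)

end

/-- If `G` is a chordal claw-free graph, then `Δ(G) ≤ 3ω(G)` and hence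
`χ⃗(G) ≤ 3ω(G)`. -/
theorem chordal_clawFree_bound {V : Type*} [Fintype V] (G : SimpleGraph V)
    [DecidableRel G.Adj] (hchordal : IsChordal G) (hclaw : IsClawFree G) :
    G.maxDegree ≤ 3 * G.cliqueNum ∧ properOrientNum G ≤ 3 * G.cliqueNum := by
  have hΔ : G.maxDegree ≤ 3 * G.cliqueNum :=
    G.maxDegree_le_of_forall_degree_le _ (hchordal.degree_le_three_mul_cliqueNum hclaw)
  exact ⟨hΔ, properOrientNum_le_maxDegree.trans hΔ⟩
end

section
/- Let G1 and G2 be graphs on n1 ≥ 1 and n2 ≥ 1 vertices, respectively, and let G = G1 ∧ G2 be their join. Then χ⃗(G) ≤ min{χ⃗(G1) + n2, χ⃗(G2) + n1}. -/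
open SimpleGraph

/-- The join of two graphs: their disjoint union plus all edges between the two parts. -/
def graphJoin {V1 V2 : Type*} (G1 : SimpleGraph V1) (G2 : SimpleGraph V2) :
    SimpleGraph (V1 ⊕ V2) where
  Adj x y :=
    match x, y with
    | .inl a, .inl b => G1.Adj a b
    | .inr a, .inr b => G2.Adj a b
    | .inl _, .inr _ => True
    | .inr _, .inl _ => True
  symm := by
    constructor
    rintro (a | a) (b | b) h <;> simp_all <;> exact h.symm
  loopless := by
    constructor
    rintro (a | a) h <;> simp_all

/-!
Take optimal proper orientations of `G1` and `G2` and orient every edge between the two sides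
towards `V1`. Indegrees in `V1` grow by exactly `n2`, while indegrees in `V2` stay below `n2`,
so no cross edge joins vertices of equal indegree; the other bound follows by symmetry.

The infimum defining `χ⃗` is attained because every finite graph has a proper orientation:
reversing an arc `u → v` with `d⁻(u) = d⁻(v)` increases `∑ w, d⁻(w) ^ 2`, so an orientation
maximising this sum is proper.
-/

namespace Orient

variable {V : Type*} {G : SimpleGraph V}

instance : Nonempty (Orient G) := by
  classical
  exact ⟨{
    dir := fun u v => decide (G.Adj u v ∧ WellOrderingRel u v)
    adj_of_dir := fun u v h => (of_decide_eq_true h).1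
    dir_iff := fun u v huv => by
      have := trichotomous_of WellOrderingRel u v
      have := asymm_of WellOrderingRel (a := u) (b := v)
      simp only [decide_eq_true_eq, huv, huv.symm, true_and]
      grind [huv.ne] }⟩

instance [Finite V] : Finite (Orient G) :=
  Finite.of_injective Orient.dir fun D D' h => by cases D; cases D'; congr

def reverse [DecidableEq V] (D : Orient G) {u v : V} (huv : G.Adj u v) : Orient G where
  dir x y := if s(x, y) = s(u, v) then !D.dir x y else D.dir x y
  adj_of_dir x y h := by
    split_ifs at h with hxy
    · rwa [← G.mem_edgeSet, hxy]
    · exact D.adj_of_dir x y h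
  dir_iff x y hxy := by
    rw [Sym2.eq_swap (a := y)]
    have := D.dir_iff x y hxy
    split_ifs <;> revert this <;> cases D.dir x y <;> cases D.dir y x <;> simp

section reverse

open Finset

variable [Fintype V] [DecidableEq V] {D : Orient G} {u v : V}

lemma inDeg_reverse_head (h : D.dir u v = true) :
    (D.reverse (D.adj_of_dir u v h)).inDeg v + 1 = D.inDeg v := by
  have huv := D.adj_of_dir u v h
  have : ({x | (D.reverse (D.adj_of_dir u v h)).dir x v = true} : Finset V) =
      ({x | D.dir x v = true} : Finset V).erase u := by
    ext x
    by_cases hx : x = u <;> simp [reverse, hx, h, huv.ne']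
  rw [inDeg, this, card_erase_add_one (by simpa using h), inDeg]

lemma inDeg_reverse_tail (h : D.dir u v = true) :
    (D.reverse (D.adj_of_dir u v h)).inDeg u = D.inDeg u + 1 := by
  have huv := D.adj_of_dir u v h
  have : ({x | (D.reverse (D.adj_of_dir u v h)).dir x u = true} : Finset V) =
      insert v ({x | D.dir x u = true} : Finset V) := by
    ext x
    by_cases hx : x = v
    · simp [reverse, hx, (D.dir_iff u v huv).1 h]
    · simp [reverse, hx, huv.ne]
  rw [inDeg, this, card_insert_of_notMem (by simpa using (D.dir_iff u v huv).1 h), inDeg]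

lemma inDeg_reverse_of_ne (h : D.dir u v = true) {w : V} (hu : w ≠ u) (hv : w ≠ v) :
    (D.reverse (D.adj_of_dir u v h)).inDeg w = D.inDeg w := by
  unfold inDeg
  congr 1
  ext x
  simp [reverse, hu, hv]

lemma sum_sq_inDeg_lt_reverse (h : D.dir u v = true) (heq : D.inDeg u = D.inDeg v) :
    ∑ w, D.inDeg w ^ 2 < ∑ w, (D.reverse (D.adj_of_dir u v h)).inDeg w ^ 2 := by
  have huv := (D.adj_of_dir u v h).ne
  have split (f : V → ℕ) : ∑ w, f w = f u + f v + ∑ w ∈ (univ.erase u).erase v, f w := by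
    rw [add_assoc, add_sum_erase _ _ (mem_erase.2 ⟨huv.symm, mem_univ v⟩),
      add_sum_erase _ _ (mem_univ u)]
  have rest : ∑ w ∈ (univ.erase u).erase v, D.inDeg w ^ 2 =
      ∑ w ∈ (univ.erase u).erase v, (D.reverse (D.adj_of_dir u v h)).inDeg w ^ 2 :=
    sum_congr rfl fun w hw => by
      simp only [mem_erase] at hw
      rw [inDeg_reverse_of_ne h hw.2.1 hw.1]
  have head := inDeg_reverse_head h
  have tail := inDeg_reverse_tail h
  rw [split, split (fun w => _ ^ 2), rest]
  nlinarith

end reverse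

variable [Fintype V]

lemma inDeg_lt_card (D : Orient G) (v : V) : D.inDeg v < Fintype.card V :=
  Finset.card_lt_univ_of_notMem (x := v) (by simpa using fun h => G.irrefl (D.adj_of_dir v v h))

theorem exists_proper (G : SimpleGraph V) : ∃ D : Orient G, D.Proper := by
  classical
  obtain ⟨D, hD⟩ := Finite.exists_max fun D : Orient G => ∑ w, D.inDeg w ^ 2
  refine ⟨D, fun u v huv heq => ?_⟩
  wlog h : D.dir u v = true generalizing u v
  · exact this v u huv.symm heq.symm (by simpa using (D.dir_iff u v huv).not.1 h)
  exact (hD _).not_gt (sum_sq_inDeg_lt_reverse h heq)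

def map {W : Type*} {H : SimpleGraph W} (e : G ≃g H) (D : Orient G) : Orient H where
  dir x y := D.dir (e.symm x) (e.symm y)
  adj_of_dir _ _ h := e.symm.map_adj_iff.1 (D.adj_of_dir _ _ h)
  dir_iff _ _ hxy := D.dir_iff _ _ (e.symm.map_adj_iff.2 hxy)

lemma inDeg_map {W : Type*} [Fintype W] {H : SimpleGraph W} (e : G ≃g H) (D : Orient G)
    (w : W) : (D.map e).inDeg w = D.inDeg (e.symm w) :=
  Finset.card_equiv e.symm.toEquiv fun x => by
    simp only [Finset.mem_filter, Finset.mem_univ, true_and]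
    rfl

lemma Proper.map {W : Type*} [Fintype W] {H : SimpleGraph W} {D : Orient G} (hD : D.Proper)
    (e : G ≃g H) : (D.map e).Proper := fun x y hxy => by
  simpa only [inDeg_map] using hD _ _ (e.symm.map_adj_iff.2 hxy)

end Orient

lemma exists_proper_inDeg_le_properOrientNum {V : Type*} [Fintype V] (G : SimpleGraph V) :
    ∃ D : Orient G, D.Proper ∧ ∀ v, D.inDeg v ≤ properOrientNum G := by
  obtain ⟨D, hD⟩ := Orient.exists_proper G
  exact Nat.sInf_mem (s := {k | ∃ D : Orient G, D.Proper ∧ ∀ v, D.inDeg v ≤ k})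
    ⟨Fintype.card V, D, hD, fun v => (D.inDeg_lt_card v).le⟩

lemma properOrientNum_le_of_iso {V W : Type*} [Fintype V] [Fintype W] {G : SimpleGraph V}
    {H : SimpleGraph W} (e : G ≃g H) : properOrientNum H ≤ properOrientNum G := by
  obtain ⟨D, hD, hle⟩ := exists_proper_inDeg_le_properOrientNum G
  exact Nat.sInf_le ⟨D.map e, hD.map e, fun w => (D.inDeg_map e w).trans_le (hle _)⟩

section join

variable {V1 V2 : Type*} {G1 : SimpleGraph V1} {G2 : SimpleGraph V2}

def graphJoinComm (G1 : SimpleGraph V1) (G2 : SimpleGraph V2) :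
    graphJoin G1 G2 ≃g graphJoin G2 G1 :=
  ⟨Equiv.sumComm V1 V2, by rintro (a | a) (b | b) <;> exact Iff.rfl⟩

def Orient.join (D1 : Orient G1) (D2 : Orient G2) : Orient (graphJoin G1 G2) where
  dir
    | .inl a, .inl b => D1.dir a b
    | .inr a, .inr b => D2.dir a b
    | .inl _, .inr _ => false
    | .inr _, .inl _ => true
  adj_of_dir := by
    rintro (a | a) (b | b) h
    exacts [D1.adj_of_dir a b h, absurd h Bool.false_ne_true, trivial, D2.adj_of_dir a b h]
  dir_iff := by
    rintro (a | a) (b | b) hab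
    exacts [D1.dir_iff a b hab, by simp, by simp, D2.dir_iff a b hab]

variable [Fintype V1] [Fintype V2] {D1 : Orient G1} {D2 : Orient G2}

lemma Orient.inDeg_join_inl (a : V1) :
    (D1.join D2).inDeg (.inl a) = D1.inDeg a + Fintype.card V2 := by
  rw [inDeg, inDeg, Finset.card_filter, Finset.card_filter, Fintype.sum_sum_type]
  congr 1
  simp [join]

lemma Orient.inDeg_join_inr (b : V2) : (D1.join D2).inDeg (.inr b) = D2.inDeg b := by
  rw [inDeg, inDeg, Finset.card_filter, Finset.card_filter, Fintype.sum_sum_type]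
  simp only [join, Bool.false_eq_true, if_false, Finset.sum_const_zero, zero_add]
  rfl

lemma Orient.Proper.join (h1 : D1.Proper) (h2 : D2.Proper) :
    (D1.join D2).Proper := by
  rintro (a | a) (b | b) hab
  · simpa [inDeg_join_inl] using h1 a b hab
  · rw [inDeg_join_inl, inDeg_join_inr]
    have := D2.inDeg_lt_card b
    omega
  · rw [inDeg_join_inl, inDeg_join_inr]
    have := D2.inDeg_lt_card a
    omega
  · simpa [inDeg_join_inr] using h2 a b hab

end join

lemma properOrientNum_join_le_left {V1 V2 : Type*} [Fintype V1] [Fintype V2]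
    (G1 : SimpleGraph V1) (G2 : SimpleGraph V2) :
    properOrientNum (graphJoin G1 G2) ≤ properOrientNum G1 + Fintype.card V2 := by
  obtain ⟨D1, hP1, hle1⟩ := exists_proper_inDeg_le_properOrientNum G1
  obtain ⟨D2, hP2, -⟩ := exists_proper_inDeg_le_properOrientNum G2
  refine Nat.sInf_le ⟨D1.join D2, hP1.join hP2, ?_⟩
  rintro (a | b)
  · simpa [Orient.inDeg_join_inl] using hle1 a
  · simpa [Orient.inDeg_join_inr] using (D2.inDeg_lt_card b).le.trans le_add_self

theorem properOrientNum_join_le_general {V1 V2 : Type*} [Fintype V1] [Fintype V2]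
    (G1 : SimpleGraph V1) (G2 : SimpleGraph V2) :
    properOrientNum (graphJoin G1 G2) ≤
      min (properOrientNum G1 + Fintype.card V2) (properOrientNum G2 + Fintype.card V1) :=
  le_min (properOrientNum_join_le_left G1 G2)
    ((properOrientNum_le_of_iso (graphJoinComm G2 G1)).trans (properOrientNum_join_le_left G2 G1))

/-- For the join `G = G1 ∧ G2` of two nonempty graphs,
`χ⃗(G) ≤ min (χ⃗(G1) + n2) (χ⃗(G2) + n1)`. -/
theorem properOrientNum_join_le {V1 V2 : Type*} [Fintype V1] [Fintype V2]
    [Nonempty V1] [Nonempty V2] (G1 : SimpleGraph V1) (G2 : SimpleGraph V2) :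
    properOrientNum (graphJoin G1 G2) ≤
      min (properOrientNum G1 + Fintype.card V2) (properOrientNum G2 + Fintype.card V1) :=
  properOrientNum_join_le_general G1 G2
end

section
/- Let G be a split graph whose vertex set is partitioned into a maximum clique K of size ω and an independent set S. If D is a proper k-orientation of G and ℓ is the number of edges between S and K that are oriented toward K in D, then ℓ ≤ kω − ω(ω−1)/2. -/
/-! Every arc with head in `K` contributes to `∑ v ∈ K, d⁻(v) ≤ kω`. Since `K` is a clique,
each of its `ω(ω-1)/2` edges is an arc with both ends in `K`, so at most `kω - ω(ω-1)/2`
arcs remain for those entering `K` from outside. -/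

open SimpleGraph Finset

namespace Orient

variable {V : Type*} {G : SimpleGraph V} (D : Orient G)

lemma not_dir_of_dir {u v : V} (h : D.dir u v = true) : D.dir v u = false := by
  simpa using (D.dir_iff u v (D.adj_of_dir u v h)).mp h

lemma dir_or_dir_of_adj {u v : V} (h : G.Adj u v) : D.dir u v = true ∨ D.dir v u = true := by
  by_cases huv : D.dir u v = true
  · exact Or.inl huv
  · exact Or.inr ((D.dir_iff v u h.symm).mpr huv)

variable [Fintype V] [DecidableEq V]

lemma sum_inDeg_eq_card_arcs_into (K : Finset V) :
    ∑ v ∈ K, D.inDeg v = #{p : V × V | p.2 ∈ K ∧ D.dir p.1 p.2 = true} := by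
  simp only [inDeg, card_filter, Fintype.sum_prod_type, ite_and]
  rw [sum_comm]
  simp [sum_ite_mem]

lemma card_arcs_into_eq_card_arcs_entering_add_card_arcs_within (K : Finset V) :
    #{p : V × V | p.2 ∈ K ∧ D.dir p.1 p.2 = true} =
      #{p : V × V | p.1 ∉ K ∧ p.2 ∈ K ∧ D.dir p.1 p.2 = true} +
        #{p : V × V | p.1 ∈ K ∧ p.2 ∈ K ∧ D.dir p.1 p.2 = true} := by
  rw [← card_filter_add_card_filter_not (fun p : V × V => p.1 ∉ K), filter_filter,
    filter_filter]
  congr 2 <;> ext p <;> simp only [mem_filter, not_not] <;> tauto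

lemma two_mul_card_arcs_within_clique_add_card {K : Finset V} (hK : G.IsClique (K : Set V)) :
    2 * #{p : V × V | p.1 ∈ K ∧ p.2 ∈ K ∧ D.dir p.1 p.2 = true} + #K = #K * #K := by
  set A := ({p : V × V | p.1 ∈ K ∧ p.2 ∈ K ∧ D.dir p.1 p.2 = true} : Finset (V × V))
  have hdisj : Disjoint A (A.image Prod.swap) := by
    rw [Finset.disjoint_left]
    intro _ hvu hswap
    obtain ⟨⟨u, v⟩, huv, rfl⟩ := mem_image.mp hswap
    simp only [A, mem_filter, Prod.swap_prod_mk] at huv hvu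
    simp [D.not_dir_of_dir huv.2.2.2] at hvu
  have hcover : A ∪ A.image Prod.swap = K.offDiag := by
    ext ⟨u, v⟩
    simp only [A, mem_union, mem_image, mem_filter, mem_univ, true_and, Prod.exists,
      Prod.swap_prod_mk, Prod.mk.injEq, mem_offDiag]
    constructor
    · rintro (⟨hu, hv, huv⟩ | ⟨v, u, ⟨hv, hu, hvu⟩, rfl, rfl⟩)
      · exact ⟨hu, hv, (D.adj_of_dir u v huv).ne⟩
      · exact ⟨hu, hv, (D.adj_of_dir v u hvu).ne'⟩
    · rintro ⟨hu, hv, hne⟩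
      rcases D.dir_or_dir_of_adj (hK hu hv hne) with huv | hvu
      · exact Or.inl ⟨hu, hv, huv⟩
      · exact Or.inr ⟨v, u, ⟨hv, hu, hvu⟩, rfl, rfl⟩
  have hcard := card_union_of_disjoint hdisj
  rw [hcover, card_image_of_injective _ Prod.swap_injective, offDiag_card] at hcard
  have : #K ≤ #K * #K := Nat.le_mul_self _
  omega

end Orient

theorem split_arcs_into_max_clique_bound_general {V : Type*} [Fintype V] [DecidableEq V]
    (G : SimpleGraph V) (K : Finset V) (ω k : ℕ)
    (hclique : G.IsClique (↑K : Set V)) (hcard : K.card = ω)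
    (D : Orient G) (hk : ∀ v, D.inDeg v ≤ k) :
    ((Finset.univ.filter
        (fun p : V × V => p.1 ∉ K ∧ p.2 ∈ K ∧ D.dir p.1 p.2 = true)).card : ℤ) ≤
      k * ω - ω * (ω - 1) / 2 := by
  subst hcard
  have hsplit := D.card_arcs_into_eq_card_arcs_entering_add_card_arcs_within K
  have hwithin := D.two_mul_card_arcs_within_clique_add_card hclique
  rw [← D.sum_inDeg_eq_card_arcs_into] at hsplit
  have hsum : ∑ v ∈ K, D.inDeg v ≤ #K * k := by
    simpa using sum_le_card_nsmul K D.inDeg k fun v _ => hk v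
  set within := #{p : V × V | p.1 ∈ K ∧ p.2 ∈ K ∧ D.dir p.1 p.2 = true}
  have htwice : (#K : ℤ) * (#K - 1) = 2 * within := by
    zify at hwithin
    linear_combination -hwithin
  rw [htwice, Int.mul_ediv_cancel_left _ two_ne_zero]
  zify at hsplit hsum
  linarith

/-- Let `G` be a split graph partitioned into a maximum clique `K` of size `ω` and an
independent set. If `D` is a proper `k`-orientation of `G` and `ℓ` is the number of
edges from outside `K` into `K` that are oriented toward `K`, then
`ℓ ≤ kω - ω(ω-1)/2`. -/
theorem split_arcs_into_max_clique_bound {V : Type*} [Fintype V] [DecidableEq V]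
    (G : SimpleGraph V) (K : Finset V) (ω k : ℕ)
    (hclique : G.IsClique (↑K : Set V)) (hcard : K.card = ω)
    (hmaxclique : G.cliqueNum = ω)
    (hindep : ∀ u ∉ K, ∀ v ∉ K, ¬ G.Adj u v)
    (D : Orient G) (hproper : D.Proper) (hk : ∀ v, D.inDeg v ≤ k) :
    ((Finset.univ.filter
        (fun p : V × V => p.1 ∉ K ∧ p.2 ∈ K ∧ D.dir p.1 p.2 = true)).card : ℤ) ≤
      k * ω - ω * (ω - 1) / 2 :=
  split_arcs_into_max_clique_bound_general G K ω k hclique hcard D hk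
end

section
/- For every nonnegative integer k, the graph S(k) is chordal. -/
open SimpleGraph

/-- The graph `S(k)`: a clique `K = {v_0, …, v_k}` (the left summand); for each
`j ∈ {0, …, k-1}` a clique `K^j` on `k + 1 - j` vertices meeting the rest of the graph
exactly in `v_j` (its `k - j` new vertices form the fiber over `j` in the right
summand); and additional edges from `v_j` to all vertices of `K^ℓ` for every
`j ∈ {0, …, k-2}` and `ℓ ∈ {j+1, …, k-1}`. Thus `v_a` is adjacent to the new vertices
of `K^j` exactly when `a ≤ j`. -/
def Sgraph (k : ℕ) : SimpleGraph (Fin (k + 1) ⊕ Σ j : Fin k, Fin (k - j.val)) where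
  Adj x y :=
    match x, y with
    | .inl a, .inl b => a ≠ b
    | .inl a, .inr p => a.val ≤ p.1.val
    | .inr p, .inl a => a.val ≤ p.1.val
    | .inr p, .inr q => p.1 = q.1 ∧ p ≠ q
  symm := by
    constructor
    rintro (a | p) (b | q) h
    · exact Ne.symm h
    · exact h
    · exact h
    · exact ⟨h.1.symm, h.2.symm⟩
  loopless := by
    constructor
    rintro (a | p) h
    · exact h rfl
    · exact h.2 rfl

/-
Every vertex `(j, i)` of the right summand is simplicial: its neighbours are the other vertices
of its fiber together with `v_0, …, v_j`, and these form a clique. In an induced cycle of length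
at least `4` no vertex is simplicial, because the two cycle neighbours of a vertex are not
adjacent. So an induced cycle would lie in the clique `{v_0, …, v_k}`, which is absurd.
-/

namespace SimpleGraph

variable {V : Type*}

def IsSimplicial (G : SimpleGraph V) (v : V) : Prop :=
  G.IsClique (G.neighborSet v)

open Fin.CommRing

theorem cycleGraph_ne_and_not_adj_sub_one_add_one (m : ℕ) (j : Fin (m + 4)) :
    j - 1 ≠ j + 1 ∧ ¬ (cycleGraph (m + 4)).Adj (j - 1) (j + 1) := by
  have h2 : (2 : Fin (m + 4)) ≠ 0 := by simp [Fin.ext_iff, Nat.mod_eq_of_lt]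
  have h3 : (3 : Fin (m + 4)) ≠ 0 := by simp [Fin.ext_iff, Nat.mod_eq_of_lt]
  rw [cycleGraph_adj]
  refine ⟨fun h => h2 ?_, ?_⟩
  · linear_combination -h
  · rintro (h | h)
    · exact h3 (by linear_combination -h)
    · exact one_ne_zero (by linear_combination h)

theorem Embedding.not_isSimplicial_of_cycleGraph {G : SimpleGraph V} {m : ℕ}
    (f : cycleGraph (m + 4) ↪g G) (j : Fin (m + 4)) : ¬ G.IsSimplicial (f j) := by
  intro hsimp
  obtain ⟨hne, hnadj⟩ := cycleGraph_ne_and_not_adj_sub_one_add_one m j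
  have hpred : G.Adj (f j) (f (j - 1)) := by
    rw [f.map_adj_iff, cycleGraph_adj]
    left; ring
  have hsucc : G.Adj (f j) (f (j + 1)) := by
    rw [f.map_adj_iff, cycleGraph_adj]
    right; ring
  exact hnadj (f.map_adj_iff.mp (hsimp hpred hsucc (f.injective.ne hne)))

end SimpleGraph

theorem IsChordal.of_isClique_of_isSimplicial {V : Type*} {G : SimpleGraph V} {S : Set V}
    (hS : G.IsClique S) (hsimp : ∀ v ∉ S, G.IsSimplicial v) : IsChordal G := by
  intro n hn
  obtain ⟨m, rfl⟩ : ∃ m, n = m + 4 := ⟨n - 4, by omega⟩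
  refine ⟨fun f => ?_⟩
  have hmem : ∀ j, f j ∈ S := fun j =>
    by_contra fun h => f.not_isSimplicial_of_cycleGraph j (hsimp _ h)
  obtain ⟨hne, hnadj⟩ := cycleGraph_ne_and_not_adj_sub_one_add_one m 0
  exact hnadj (f.map_adj_iff.mp (hS (hmem _) (hmem _) (f.injective.ne hne)))

theorem Sgraph_isClique_range_inl (k : ℕ) : (Sgraph k).IsClique (Set.range Sum.inl) := by
  rintro _ ⟨a, rfl⟩ _ ⟨b, rfl⟩ hab
  exact fun h => hab (congrArg Sum.inl h)

theorem Sgraph_isSimplicial_inr (k : ℕ) (p : Σ j : Fin k, Fin (k - j.val)) :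
    (Sgraph k).IsSimplicial (.inr p) := by
  rintro (a | q) hx (b | r) hy hxy
  · exact fun h => hxy (congrArg Sum.inl h)
  · exact le_of_le_of_eq (show a.val ≤ p.1.val from hx) (congrArg Fin.val hy.1)
  · exact le_of_le_of_eq (show b.val ≤ p.1.val from hy) (congrArg Fin.val hx.1)
  · exact ⟨hx.1.symm.trans hy.1, fun h => hxy (congrArg Sum.inr h)⟩

/-- For every nonnegative integer `k`, the graph `S(k)` is chordal. -/
theorem Sgraph_chordal (k : ℕ) : IsChordal (Sgraph k) := by
  refine IsChordal.of_isClique_of_isSimplicial (Sgraph_isClique_range_inl k) ?_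
  rintro (a | p) hv
  · exact absurd ⟨a, rfl⟩ hv
  · exact Sgraph_isSimplicial_inr k p
end

section
/- For a positive integer k, let G be a graph containing S(k) as an induced subgraph, where no vertex of S(k) other than possibly the vertices v_0, …, v_k has a neighbor outside S(k). Then in any proper k-orientation D of G, one has d⁻_D(v_j) = j for each j ∈ {0, 1, …, k}; moreover, every edge uv of G with v ∈ V(S(k)) and u ∈ V(G)∖V(S(k)) is oriented toward u in D. -/
/-!
For `j < k`, the vertices `v_0, …, v_j` together with `K^j` form a clique on `k + 1` vertices.
In a proper `k`-orientation the indegrees on such a clique are exactly `0, …, k`, so they add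
up to the number of edges inside it: no arc enters the clique from outside. Hence `v_a → v_m`
whenever `a < m`, so `v_m` has indegree at least `m`; as the indegrees of `v_0, …, v_k` are
distinct and at most `k`, `v_m` has indegree exactly `m`, all of it coming from
`v_0, …, v_{m-1}`. Every other edge at `v_m` is therefore oriented away from it, and the
remaining vertices of `S(k)` have no neighbours outside it.
-/

open SimpleGraph

open Finset

namespace Orient

variable {V : Type*} {G : SimpleGraph V} (D : Orient G)

theorem dir_of_not_dir {u v : V} (huv : G.Adj u v) (h : ¬D.dir u v = true) :
    D.dir v u = true :=
  (D.dir_iff v u huv.symm).mpr h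

theorem not_dir_self (v : V) : ¬D.dir v v = true :=
  fun h => G.loopless.irrefl v (D.adj_of_dir v v h)

theorem ite_dir_add_ite_dir {u v : V} (huv : G.Adj u v) :
    ((if D.dir u v = true then 1 else 0) + if D.dir v u = true then 1 else 0) = 1 := by
  by_cases h : D.dir u v = true
  · simp [h, (D.dir_iff u v huv).mp h]
  · simp [h, D.dir_of_not_dir huv h]

theorem sum_card_dir_of_isClique {S : Finset V} (hS : G.IsClique (S : Set V)) :
    ∑ v ∈ S, #{u ∈ S | D.dir u v = true} = (#S).choose 2 := by
  classical
  have hrow : ∀ v ∈ S,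
      ∑ u ∈ S, ((if D.dir u v = true then 1 else 0) + if D.dir v u = true then 1 else 0) =
        #S - 1 := by
    intro v hv
    rw [← add_sum_erase S _ hv, sum_congr rfl fun u hu =>
      D.ite_dir_add_ite_dir (hS (mem_erase.mp hu).2 hv (mem_erase.mp hu).1)]
    simp [D.not_dir_self v, card_erase_of_mem hv]
  have htwice : 2 * ∑ v ∈ S, #{u ∈ S | D.dir u v = true} = #S * (#S - 1) := by
    simp only [card_filter]
    calc 2 * ∑ v ∈ S, ∑ u ∈ S, (if D.dir u v = true then 1 else 0)
        = ∑ v ∈ S, ∑ u ∈ S, (if D.dir u v = true then 1 else 0) +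
            ∑ v ∈ S, ∑ u ∈ S, (if D.dir v u = true then 1 else 0) := by
          rw [two_mul, sum_comm (f := fun u v => if D.dir v u = true then 1 else 0)]
      _ = ∑ v ∈ S, (#S - 1) := by
          rw [← sum_add_distrib]
          exact sum_congr rfl fun v hv => (sum_add_distrib.symm).trans (hrow v hv)
      _ = #S * (#S - 1) := by rw [sum_const, smul_eq_mul]
  rw [Nat.choose_two_right]
  omega

end Orient

theorem Finset.sum_eq_choose_two_of_injOn {α : Type*} {S : Finset α} {f : α → ℕ}
    (hf : Set.InjOn f S) (hlt : ∀ a ∈ S, f a < #S) : ∑ a ∈ S, f a = (#S).choose 2 := by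
  classical
  have himage : S.image f = range #S :=
    eq_of_subset_of_card_le
      (fun n hn => by
        obtain ⟨a, ha, rfl⟩ := mem_image.mp hn
        exact mem_range.mpr (hlt a ha))
      (by rw [card_range, card_image_of_injOn hf])
  rw [Nat.choose_two_right, ← sum_range_id, ← himage, sum_image hf]

theorem Fin.apply_eq_val_of_injective {n : ℕ} {f : Fin n → ℕ} (hf : Function.Injective f)
    (hlt : ∀ i, f i < n) (hle : ∀ i : Fin n, (i : ℕ) ≤ f i) (i : Fin n) : f i = i := by
  have hsum : ∑ i : Fin n, (i : ℕ) = ∑ i, f i := by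
    rw [sum_eq_choose_two_of_injOn Fin.val_injective.injOn (by simp),
      sum_eq_choose_two_of_injOn hf.injOn (fun i _ => by simpa using hlt i)]
  exact ((sum_eq_sum_iff_of_le fun i _ => hle i).mp hsum i (mem_univ i)).symm

/-- The indegrees on `S` are distinct and below `#S`, so they add up to `(#S).choose 2`, which
the arcs inside `S` already account for. -/
theorem Orient.Proper.mem_of_dir_of_isClique {V : Type*} [Fintype V] {G : SimpleGraph V}
    {D : Orient G} (hD : D.Proper) {S : Finset V} (hS : G.IsClique (S : Set V))
    (hdeg : ∀ v ∈ S, D.inDeg v < #S) {u v : V} (hv : v ∈ S) (huv : D.dir u v = true) :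
    u ∈ S := by
  have hsub : ∀ w, {x ∈ S | D.dir x w = true} ⊆ ({x | D.dir x w = true} : Finset V) :=
    fun w => filter_subset_filter _ (subset_univ S)
  have hinj : Set.InjOn D.inDeg S :=
    fun x hx y hy hxy => by_contra fun hne => hD x y (hS hx hy hne) hxy
  have hsum : ∑ w ∈ S, #{x ∈ S | D.dir x w = true} = ∑ w ∈ S, D.inDeg w := by
    rw [D.sum_card_dir_of_isClique hS, sum_eq_choose_two_of_injOn hinj hdeg]
  have hv_eq := (sum_eq_sum_iff_of_le fun w _ => card_le_card (hsub w)).mp hsum v hv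
  have hu : u ∈ ({x | D.dir x v = true} : Finset V) := by simpa using huv
  rw [← eq_of_subset_of_card_le (hsub v) hv_eq.ge] at hu
  exact (mem_filter.mp hu).1

theorem SimpleGraph.IsClique.finsetMap_embedding {α β : Type*} {G : SimpleGraph α}
    {H : SimpleGraph β} (f : G ↪g H) {s : Finset α} (hs : G.IsClique (s : Set α)) :
    H.IsClique (s.map f.toEmbedding : Set β) :=
  hs.finsetMap.mono ((map_le_iff_le_comap _ _ _).mpr fun _ _ => f.map_adj_iff.mpr)

namespace Sgraph

section Clique

/-- The clique `{v_0, …, v_j} ∪ K^j` of `S(k)`. -/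
def clique (k : ℕ) (j : Fin k) : Finset (Fin (k + 1) ⊕ Σ j : Fin k, Fin (k - j.val)) :=
  (Iic j.castSucc).disjSum (({j} : Finset (Fin k)).sigma fun _ => univ)

variable {k : ℕ} {j : Fin k}

@[simp]
theorem inl_mem_clique {a : Fin (k + 1)} : .inl a ∈ clique k j ↔ a ≤ j.castSucc :=
  inl_mem_disjSum.trans mem_Iic

@[simp]
theorem inr_mem_clique {p : Σ j : Fin k, Fin (k - j.val)} : .inr p ∈ clique k j ↔ p.1 = j := by
  simp [clique]

theorem card_clique : #(clique k j) = k + 1 := by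
  simp only [clique, card_disjSum, Fin.card_Iic, card_sigma, sum_singleton, card_univ,
    Fintype.card_fin, Fin.val_castSucc]
  omega

theorem isClique_clique : (Sgraph k).IsClique (clique k j : Set _) := by
  rintro (a | p) ha (b | q) hb hne <;>
    simp only [mem_coe, inl_mem_clique, inr_mem_clique] at ha hb
  · exact fun h => hne (congrArg _ h)
  · change a.val ≤ q.1.val
    rwa [hb]
  · change b.val ≤ p.1.val
    rwa [ha]
  · exact ⟨ha.trans hb.symm, fun h => hne (congrArg _ h)⟩

end Clique

variable {V : Type*} [Fintype V] {G : SimpleGraph V} {k : ℕ} (φ : Sgraph k ↪g G)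
  {D : Orient G} (hD : D.Proper) (hkor : ∀ v, D.inDeg v ≤ k)
include hD hkor

theorem dir_inl_of_lt {a m : Fin (k + 1)} (ham : a < m) :
    D.dir (φ (.inl a)) (φ (.inl m)) = true := by
  let j : Fin k := ⟨a, by omega⟩
  have hcard : #((clique k j).map φ.toEmbedding) = k + 1 := by rw [card_map, card_clique]
  have hadj : G.Adj (φ (.inl m)) (φ (.inl a)) := φ.map_adj_iff.mpr ham.ne'
  refine D.dir_of_not_dir hadj fun hma => ?_
  have hm := hD.mem_of_dir_of_isClique (isClique_clique.finsetMap_embedding φ)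
    (fun v _ => by rw [hcard]; exact Nat.lt_succ_of_le (hkor v))
    (show φ (.inl a) ∈ (clique k j).map φ.toEmbedding from
      mem_map_of_mem _ (inl_mem_clique.mpr le_rfl)) hma
  have hmj : m ≤ j.castSucc := inl_mem_clique.mp ((mem_map' _).mp hm)
  exact absurd ham (not_lt.mpr hmj)

theorem map_Iio_subset_dir (m : Fin (k + 1)) :
    (Iio m).map (Function.Embedding.inl.trans φ.toEmbedding) ⊆
      ({u | D.dir u (φ (.inl m)) = true} : Finset V) := by
  intro u hu
  obtain ⟨a, ha, rfl⟩ := mem_map.mp hu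
  simpa using dir_inl_of_lt φ hD hkor (mem_Iio.mp ha)

theorem inDeg_inl (m : Fin (k + 1)) : D.inDeg (φ (.inl m)) = m :=
  Fin.apply_eq_val_of_injective (f := fun m => D.inDeg (φ (.inl m)))
    (fun a b h => by_contra fun hne =>
      hD _ _ (φ.map_adj_iff.mpr (show (Sgraph k).Adj (.inl a) (.inl b) from hne)) h)
    (fun m => Nat.lt_succ_of_le (hkor _))
    (fun m => (by simp : (m : ℕ) = #((Iio m).map _)).trans_le
      (card_le_card (map_Iio_subset_dir φ hD hkor m))) m

theorem mem_range_of_dir_inl {a : Fin (k + 1)} {u : V} (hu : D.dir u (φ (.inl a)) = true) :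
    u ∈ Set.range φ := by
  have heq := eq_of_subset_of_card_le (map_Iio_subset_dir φ hD hkor a) <| by
    rw [card_map, Fin.card_Iio]
    exact (inDeg_inl φ hD hkor a).le
  have hu' : u ∈ ({u | D.dir u (φ (.inl a)) = true} : Finset V) := by simpa using hu
  obtain ⟨b, -, rfl⟩ := mem_map.mp (heq ▸ hu')
  exact ⟨_, rfl⟩

end Sgraph

theorem Sgraph_indegrees_forced_general {V : Type*} [Fintype V] (G : SimpleGraph V)
    (k : ℕ) (φ : Sgraph k ↪g G)
    (houtside : ∀ (p : Σ j : Fin k, Fin (k - j.val)) (u : V),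
      u ∉ Set.range φ → ¬ G.Adj (φ (Sum.inr p)) u)
    (D : Orient G) (hproper : D.Proper) (hkor : ∀ v, D.inDeg v ≤ k) :
    (∀ j : Fin (k + 1), D.inDeg (φ (Sum.inl j)) = j.val) ∧
    (∀ (x : Fin (k + 1) ⊕ Σ j : Fin k, Fin (k - j.val)) (u : V),
      u ∉ Set.range φ → G.Adj (φ x) u → D.dir (φ x) u = true) := by
  refine ⟨Sgraph.inDeg_inl φ hproper hkor, ?_⟩
  rintro (a | p) u hu hadj
  · exact D.dir_of_not_dir hadj.symm fun h => hu (Sgraph.mem_range_of_dir_inl φ hproper hkor h)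
  · exact absurd hadj (houtside p u hu)

/-- If `S(k)` (`k ≥ 1`) is an induced subgraph of `G` (via the embedding `φ`) in which
only the vertices `v_0, …, v_k` may have neighbours outside `S(k)`, then in any proper
`k`-orientation of `G` the vertex `v_j` has indegree `j`, and every edge between `S(k)`
and the rest of `G` is oriented away from `S(k)`. -/
theorem Sgraph_indegrees_forced {V : Type*} [Fintype V] (G : SimpleGraph V)
    (k : ℕ) (hk : 1 ≤ k) (φ : Sgraph k ↪g G)
    (houtside : ∀ (p : Σ j : Fin k, Fin (k - j.val)) (u : V),
      u ∉ Set.range φ → ¬ G.Adj (φ (Sum.inr p)) u)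
    (D : Orient G) (hproper : D.Proper) (hkor : ∀ v, D.inDeg v ≤ k) :
    (∀ j : Fin (k + 1), D.inDeg (φ (Sum.inl j)) = j.val) ∧
    (∀ (x : Fin (k + 1) ⊕ Σ j : Fin k, Fin (k - j.val)) (u : V),
      u ∉ Set.range φ → G.Adj (φ x) u → D.dir (φ x) u = true) :=
  Sgraph_indegrees_forced_general G k φ houtside D hproper hkor
end
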